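/- If, in the successive shortest path scheme, flow is always augmented along a minimum-cost residual path from a vertex with positive excess to a vertex with negative excess, and the residual network initially contains no negative-cost cycle, then after each augmentation the residual network still contains no negative-cost cycle. -/

import Mathlib

open Finset

/-- A flow network: directed arcs with costs, capacities (possibly infinite),
lower bounds and vertex balances. -/
structure Network (V E : Type) where
  src : E → V
  dst : E → V
  cost : E → ℝ
  cap : E → WithTop ℝ
  low : E → ℝ
  bal : V → ℝ

variable {V E : Type}

def outflow [Fintype E] [DecidableEq V] (N : Network V E) (f : E → ℝ) (v : V) : ℝ :=
  ∑ e, if N.src e = v then f e else 0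

def inflow [Fintype E] [DecidableEq V] (N : Network V E) (f : E → ℝ) (v : V) : ℝ :=
  ∑ e, if N.dst e = v then f e else 0

/-- `f` obeys lower bounds and capacities. -/
def RespectsCap (N : Network V E) (f : E → ℝ) : Prop :=
  ∀ e, N.low e ≤ f e ∧ (f e : WithTop ℝ) ≤ N.cap e

/-- Feasible flow: capacity constraints and balance constraints. -/
def Feasible [Fintype E] [DecidableEq V] (N : Network V E) (f : E → ℝ) : Prop :=
  RespectsCap N f ∧ ∀ v, outflow N f v - inflow N f v = N.bal v

def flowCost [Fintype E] (N : Network V E) (f : E → ℝ) : ℝ := ∑ e, N.cost e * f e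

/-- Excess of a vertex: `b(v) + inflow - outflow`. -/
def excess [Fintype E] [DecidableEq V] (N : Network V E) (f : E → ℝ) (v : V) : ℝ :=
  N.bal v + inflow N f v - outflow N f v

/-- Residual steps: `Sum.inl e` is the forward residual arc of `e`,
`Sum.inr e` the backward (reverse) residual arc. -/
def stepTail (N : Network V E) : E ⊕ E → V := Sum.elim N.src N.dst
def stepHead (N : Network V E) : E ⊕ E → V := Sum.elim N.dst N.src
def stepCost (N : Network V E) : E ⊕ E → ℝ := Sum.elim N.cost (fun e => -N.cost e)

/-- A residual step is present in the residual network `G_f`. -/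
def StepOk (N : Network V E) (f : E → ℝ) : E ⊕ E → Prop :=
  Sum.elim (fun e => (f e : WithTop ℝ) < N.cap e) (fun e => N.low e < f e)

def listCost (N : Network V E) (L : List (E ⊕ E)) : ℝ := (L.map (stepCost N)).sum

/-- A (closed) directed cycle in the residual network `G_f`. -/
def IsResidCycle (N : Network V E) (f : E → ℝ) (L : List (E ⊕ E)) : Prop :=
  L ≠ [] ∧ (∀ d ∈ L, StepOk N f d) ∧
  L.Chain' (fun a b => stepHead N a = stepTail N b) ∧
  L.getLast?.map (stepHead N) = L.head?.map (stepTail N)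

/-- The residual network contains no negative-cost cycle. -/
def NoNegCycle (N : Network V E) (f : E → ℝ) : Prop :=
  ∀ L, IsResidCycle N f L → 0 ≤ listCost N L

/-- A directed path from `s` to `t` in the residual network `G_f`. -/
def IsResidPath (N : Network V E) (f : E → ℝ) (s t : V) (L : List (E ⊕ E)) : Prop :=
  (∀ d ∈ L, StepOk N f d) ∧
  L.Chain' (fun a b => stepHead N a = stepTail N b) ∧
  L.head?.map (stepTail N) = some s ∧ L.getLast?.map (stepHead N) = some t

/-- Augmenting `δ` units of flow along the residual path `P`. -/
def augment [DecidableEq E] (f : E → ℝ) (δ : ℝ) (P : List (E ⊕ E)) : E → ℝ :=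
  fun e => f e + δ * ((P.count (Sum.inl e) : ℝ) - (P.count (Sum.inr e) : ℝ))

/-!
Shortest-path distances from `s` act as potentials. Since `P` is a cheapest `s`-`t` walk and
`s ≠ t`, every prefix of `P` is a cheapest walk from `s` to its endpoint, so the reversal of an arc
of `P` has reduced cost zero; these reversals are the only new residual arcs. Hence along any walk
of the new residual network that starts on `P`, the cost of reaching the current vertex from `s`
in the old residual network grows by at most the cost of the walk. A new cycle through a reversed
arc can be started on `P`, so its cost is nonnegative; cycles of old arcs are nonnegative by
hypothesis. The distances are never formed: the argument compares walks directly.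
-/

-- Core derives `BEq` for `Sum` (the instance `List.count` uses in `augment`) but not `LawfulBEq`.
instance {α β : Type*} [BEq α] [BEq β] [LawfulBEq α] [LawfulBEq β] : LawfulBEq (α ⊕ β) where
  rfl {a} := by cases a with
    | inl x => exact beq_self_eq_true x
    | inr x => exact beq_self_eq_true x
  eq_of_beq {a b} h := by
    cases a <;> cases b <;> first | cases h | exact congrArg _ (eq_of_beq h)

def IsResidWalk (N : Network V E) (f : E → ℝ) : V → V → List (E ⊕ E) → Prop
  | u, v, [] => u = v
  | u, v, a :: L => StepOk N f a ∧ stepTail N a = u ∧ IsResidWalk N f (stepHead N a) v L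

section Walks

variable {N : Network V E} {f : E → ℝ} {u v : V}

@[simp] lemma isResidWalk_nil : IsResidWalk N f u v [] ↔ u = v := Iff.rfl

@[simp] lemma isResidWalk_cons {a : E ⊕ E} {L : List (E ⊕ E)} :
    IsResidWalk N f u v (a :: L) ↔
      StepOk N f a ∧ stepTail N a = u ∧ IsResidWalk N f (stepHead N a) v L :=
  Iff.rfl

lemma isResidWalk_append {L₁ L₂ : List (E ⊕ E)} :
    IsResidWalk N f u v (L₁ ++ L₂) ↔ ∃ m, IsResidWalk N f u m L₁ ∧ IsResidWalk N f m v L₂ := by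
  induction L₁ generalizing u with
  | nil => simp
  | cons a L ih => simp [ih, and_assoc]

lemma isResidWalk_cons_iff {a : E ⊕ E} {L : List (E ⊕ E)} :
    IsResidWalk N f u v (a :: L) ↔
      (∀ d ∈ a :: L, StepOk N f d) ∧ (a :: L).IsChain (fun a b => stepHead N a = stepTail N b) ∧
        stepTail N a = u ∧ stepHead N ((a :: L).getLast (List.cons_ne_nil a L)) = v := by
  induction L generalizing a u with
  | nil => simp
  | cons b L ih =>
    rw [isResidWalk_cons, ih, List.isChain_cons_cons, List.getLast_cons_cons]
    simp only [List.forall_mem_cons]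
    grind

lemma isResidPath_iff {s t : V} {L : List (E ⊕ E)} :
    IsResidPath N f s t L ↔ L ≠ [] ∧ IsResidWalk N f s t L := by
  cases L with
  | nil => simp [IsResidPath]
  | cons a L =>
    simp only [IsResidPath, isResidWalk_cons_iff, List.head?_cons, Option.map_some,
      List.getLast?_eq_some_getLast (List.cons_ne_nil a L), Option.some.injEq, ne_eq,
      reduceCtorEq, not_false_eq_true, true_and]
    exact Iff.rfl

lemma IsResidCycle.exists_isResidWalk {L : List (E ⊕ E)} (h : IsResidCycle N f L) :
    ∃ v, IsResidWalk N f v v L := by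
  obtain ⟨hne, hok, hchain, hclosed⟩ := h
  obtain ⟨a, L, rfl⟩ := List.exists_cons_of_ne_nil hne
  refine ⟨stepTail N a, isResidWalk_cons_iff.2 ⟨hok, hchain, rfl, ?_⟩⟩
  simpa [List.getLast?_eq_some_getLast (List.cons_ne_nil a L)] using hclosed

@[simp] lemma listCost_nil : listCost N [] = 0 := rfl

@[simp] lemma listCost_cons (a : E ⊕ E) (L : List (E ⊕ E)) :
    listCost N (a :: L) = stepCost N a + listCost N L := by
  simp [listCost]

@[simp] lemma listCost_append (L₁ L₂ : List (E ⊕ E)) :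
    listCost N (L₁ ++ L₂) = listCost N L₁ + listCost N L₂ := by
  simp [listCost]

lemma IsResidWalk.exists_rotate {C : List (E ⊕ E)}
    (hC : IsResidWalk N f v v C) {a : E ⊕ E} (ha : a ∈ C) :
    ∃ C', IsResidWalk N f (stepTail N a) (stepTail N a) C' ∧ listCost N C' = listCost N C := by
  obtain ⟨X, Y, rfl⟩ := List.append_of_mem ha
  obtain ⟨m, hX, hY⟩ := isResidWalk_append.1 hC
  obtain ⟨-, rfl, -⟩ := isResidWalk_cons.1 hY
  exact ⟨a :: Y ++ X, isResidWalk_append.2 ⟨v, hY, hX⟩, by simp only [listCost_append]; ring⟩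

end Walks

section Steps

variable {N : Network V E}

@[simp] lemma stepTail_swap (a : E ⊕ E) : stepTail N a.swap = stepHead N a := by
  cases a <;> rfl

@[simp] lemma stepHead_swap (a : E ⊕ E) : stepHead N a.swap = stepTail N a := by
  cases a <;> rfl

@[simp] lemma stepCost_swap (a : E ⊕ E) : stepCost N a.swap = -stepCost N a := by
  cases a <;> simp [stepCost]

lemma StepOk.of_augment [DecidableEq E] {f : E → ℝ} {δ : ℝ} {P : List (E ⊕ E)} (hδ : 0 ≤ δ)
    {a : E ⊕ E} (h : StepOk N (augment f δ P) a) : StepOk N f a ∨ a.swap ∈ P := by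
  refine or_iff_not_imp_right.2 fun ha => ?_
  cases a with
  | inl e =>
    have hle : f e ≤ augment f δ P e := by
      simp only [Sum.swap_inl] at ha
      simp only [augment, List.count_eq_zero_of_not_mem ha, Nat.cast_zero, sub_zero]
      exact le_add_of_nonneg_right (by positivity)
    exact lt_of_le_of_lt (WithTop.coe_le_coe.2 hle) h
  | inr e =>
    have hle : augment f δ P e ≤ f e := by
      simp only [Sum.swap_inr] at ha
      simp only [augment, List.count_eq_zero_of_not_mem ha, Nat.cast_zero, zero_sub, mul_neg]
      exact add_le_of_nonpos_right (neg_nonpos.2 (by positivity))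
    exact lt_of_lt_of_le h hle

end Steps

section MinCostPath

variable {N : Network V E} {f : E → ℝ} {s t : V} {P : List (E ⊕ E)}

lemma listCost_prefix_le (hst : s ≠ t)
    (hmin : ∀ Q, IsResidPath N f s t Q → listCost N P ≤ listCost N Q)
    {Pre Suf L : List (E ⊕ E)} {v : V} (hP : P = Pre ++ Suf) (hSuf : IsResidWalk N f v t Suf)
    (hL : IsResidWalk N f s v L) : listCost N Pre ≤ listCost N L := by
  have hQ : IsResidPath N f s t (L ++ Suf) := by
    refine isResidPath_iff.2 ⟨fun hnil => ?_, isResidWalk_append.2 ⟨v, hL, hSuf⟩⟩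
    obtain ⟨rfl, rfl⟩ := List.append_eq_nil_iff.1 hnil
    exact hst (hL.trans hSuf)
  have := hmin _ hQ
  rw [hP, listCost_append, listCost_append] at this
  linarith

lemma exists_isResidWalk_of_stepOk_augment [DecidableEq E] {δ : ℝ} (hδ : 0 ≤ δ) (hst : s ≠ t)
    (hP : IsResidWalk N f s t P) (hmin : ∀ Q, IsResidPath N f s t Q → listCost N P ≤ listCost N Q)
    {a : E ⊕ E} (ha : StepOk N (augment f δ P) a) {L₀ : List (E ⊕ E)}
    (hL₀ : IsResidWalk N f s (stepTail N a) L₀) :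
    ∃ L, IsResidWalk N f s (stepHead N a) L ∧ listCost N L ≤ listCost N L₀ + stepCost N a := by
  rcases ha.of_augment hδ with hold | hrev
  · exact ⟨L₀ ++ [a], isResidWalk_append.2 ⟨_, hL₀, by simpa using hold⟩, by simp⟩
  · obtain ⟨Pre, Suf, hPd⟩ := List.append_of_mem hrev
    obtain ⟨m, hPre, hrest⟩ := isResidWalk_append.1 (hPd ▸ hP)
    obtain ⟨-, hm, hSuf⟩ := isResidWalk_cons.1 hrest
    simp only [stepTail_swap, stepHead_swap] at hm hSuf
    refine ⟨Pre, hm ▸ hPre, ?_⟩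
    have := listCost_prefix_le hst hmin (hPd.trans (List.append_cons _ _ _)) hSuf hL₀
    simp only [listCost_append, listCost_cons, stepCost_swap, listCost_nil] at this
    linarith

lemma exists_isResidWalk_of_isResidWalk_augment [DecidableEq E] {δ : ℝ} (hδ : 0 ≤ δ) (hst : s ≠ t)
    (hP : IsResidWalk N f s t P) (hmin : ∀ Q, IsResidPath N f s t Q → listCost N P ≤ listCost N Q)
    {u w : V} {W : List (E ⊕ E)} (hW : IsResidWalk N (augment f δ P) u w W)
    {L₀ : List (E ⊕ E)} (hL₀ : IsResidWalk N f s u L₀) :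
    ∃ L, IsResidWalk N f s w L ∧ listCost N L ≤ listCost N L₀ + listCost N W := by
  induction W generalizing u L₀ with
  | nil => exact ⟨L₀, (isResidWalk_nil.1 hW) ▸ hL₀, by simp⟩
  | cons a W ih =>
    obtain ⟨ha, rfl, hW'⟩ := isResidWalk_cons.1 hW
    obtain ⟨L₁, hL₁, hcost₁⟩ := exists_isResidWalk_of_stepOk_augment hδ hst hP hmin ha hL₀
    obtain ⟨L, hL, hcost⟩ := ih hW' hL₁
    exact ⟨L, hL, by rw [listCost_cons]; linarith⟩

lemma listCost_nonneg_of_isResidWalk_augment [DecidableEq E] {δ : ℝ} (hδ : 0 ≤ δ) (hst : s ≠ t)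
    (hP : IsResidWalk N f s t P) (hmin : ∀ Q, IsResidPath N f s t Q → listCost N P ≤ listCost N Q)
    {b : E ⊕ E} (hb : b ∈ P) {C : List (E ⊕ E)}
    (hC : IsResidWalk N (augment f δ P) (stepHead N b) (stepHead N b) C) : 0 ≤ listCost N C := by
  obtain ⟨Pre, Suf, hPd⟩ := List.append_of_mem hb
  obtain ⟨m, hPre, hrest⟩ := isResidWalk_append.1 (hPd ▸ hP)
  obtain ⟨hbok, rfl, hSuf⟩ := isResidWalk_cons.1 hrest
  have hPre' : IsResidWalk N f s (stepHead N b) (Pre ++ [b]) :=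
    isResidWalk_append.2 ⟨_, hPre, by simpa using hbok⟩
  obtain ⟨L, hL, hcost⟩ := exists_isResidWalk_of_isResidWalk_augment hδ hst hP hmin hC hPre'
  have := listCost_prefix_le hst hmin (hPd.trans (List.append_cons _ _ _)) hSuf hL
  linarith

end MinCostPath

theorem stmt11_general {V E : Type} [Fintype E] [DecidableEq V] [DecidableEq E]
    (N : Network V E) (f : E → ℝ) (s t : V) (P : List (E ⊕ E)) (δ : ℝ)
    (hnn : NoNegCycle N f)
    (hs : 0 < excess N f s) (ht : excess N f t < 0)
    (hP : IsResidPath N f s t P)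
    (hmin : ∀ Q, IsResidPath N f s t Q → listCost N P ≤ listCost N Q)
    (hδpos : 0 < δ) :
    NoNegCycle N (augment f δ P) := by
  have hst : s ≠ t := by
    rintro rfl
    linarith
  intro C hC
  by_cases hold : ∀ a ∈ C, StepOk N f a
  · exact hnn C ⟨hC.1, hold, hC.2.2⟩
  obtain ⟨a, haC, ha⟩ := not_forall₂.1 hold
  have hrev : a.swap ∈ P := ((hC.2.1 a haC).of_augment hδpos.le).resolve_left ha
  obtain ⟨v, hCw⟩ := hC.exists_isResidWalk
  obtain ⟨C', hC', hcost⟩ := hCw.exists_rotate haC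
  rw [← hcost]
  exact listCost_nonneg_of_isResidWalk_augment hδpos.le hst (isResidPath_iff.1 hP).2 hmin hrev
    (by simpa using hC')

/-- Augmenting along a minimum-cost residual path from a vertex with positive
excess to a vertex with negative excess preserves the absence of
negative-cost residual cycles. -/
theorem stmt11 {V E : Type} [Fintype V] [Fintype E] [DecidableEq V] [DecidableEq E]
    (N : Network V E) (f : E → ℝ) (s t : V) (P : List (E ⊕ E)) (δ : ℝ)
    (hcap : RespectsCap N f)
    (hnn : NoNegCycle N f)
    (hs : 0 < excess N f s) (ht : excess N f t < 0)
    (hP : IsResidPath N f s t P)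
    (hsimple : (P.map (stepTail N)).Nodup)
    (hmin : ∀ Q, IsResidPath N f s t Q → listCost N P ≤ listCost N Q)
    (hδpos : 0 < δ)
    (hδfwd : ∀ e, Sum.inl e ∈ P → ((f e + δ : ℝ) : WithTop ℝ) ≤ N.cap e)
    (hδbwd : ∀ e, Sum.inr e ∈ P → N.low e ≤ f e - δ) :
    NoNegCycle N (augment f δ P) :=
  stmt11_general N f s t P δ hnn hs ht hP hmin hδpos
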